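/- arXiv:1908.05659 — 2 statements merged into one kernel-verified Lean document; each statement's English description precedes it below -/
import Mathlib

section
/- (CVaR dual representation on finite space) For a finite probability space with probabilities q₁,...,q_M all positive and 0 < β < 1, CVaR at level β of a random variable Z equals the maximum of Σₘ Zₘ pₘ over probability vectors p satisfying 0 ≤ pₘ ≤ qₘ/(1-β) for all m and Σₘ pₘ = 1. -/
/-!
Weak duality: writing `∑ Zₘ pₘ = τ + ∑ (Zₘ - τ) pₘ` and bounding `(Zₘ - τ) pₘ ≤ (Zₘ - τ)₊ qₘ/(1-β)`
shows that every feasible `p` gives a value below the Rockafellar–Uryasev objective at every `τ`.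
Equality holds when `τ` is a `β`-quantile of `Z`, i.e. `q(Z > τ) ≤ 1 - β ≤ q(Z ≥ τ)`, and `p` puts the
maximal density `q/(1-β)` on `{Z > τ}`, nothing on `{Z < τ}`, and the remaining mass on `{Z = τ}`:
both inequalities are then equalities termwise. So the common value is the least element of the
objective's range and the greatest feasible value.
-/

open Finset

theorem isGreatest_csInf_of_forall_le {α : Type*} [ConditionallyCompletePartialOrderInf α]
    {A B : Set α} (h : ∀ a ∈ A, ∀ b ∈ B, a ≤ b) {x : α} (hxA : x ∈ A) (hxB : x ∈ B) :
    IsGreatest A (sInf B) := by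
  rw [IsLeast.csInf_eq ⟨hxB, h x hxA⟩]
  exact ⟨hxA, fun a ha => h a ha x hxB⟩

section CVaR

variable {ι : Type*} [Fintype ι]

/-- The Rockafellar–Uryasev objective, with `α = 1 - β`. -/
noncomputable def cvarObjective (q : ι → ℝ) (α : ℝ) (Z : ι → ℝ) (τ : ℝ) : ℝ :=
  τ + (1 / α) * ∑ i, q i * max (Z i - τ) 0

theorem sum_mul_eq_add_sum_sub_mul (Z p : ι → ℝ) (τ : ℝ) (hp : ∑ i, p i = 1) :
    ∑ i, Z i * p i = τ + ∑ i, (Z i - τ) * p i := by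
  simp only [sub_mul, sum_sub_distrib, ← mul_sum, hp]
  ring

theorem sum_mul_le_cvarObjective {q p : ι → ℝ} {α : ℝ} (Z : ι → ℝ)
    (hp : ∀ i, 0 ≤ p i ∧ p i ≤ q i / α) (hp1 : ∑ i, p i = 1) (τ : ℝ) :
    ∑ i, Z i * p i ≤ cvarObjective q α Z τ := by
  rw [sum_mul_eq_add_sum_sub_mul Z p τ hp1, cvarObjective, mul_sum]
  refine add_le_add_right (sum_le_sum fun i _ => ?_) τ
  calc (Z i - τ) * p i ≤ max (Z i - τ) 0 * p i :=
        mul_le_mul_of_nonneg_right (le_max_left _ _) (hp i).1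
    _ ≤ max (Z i - τ) 0 * (q i / α) := mul_le_mul_of_nonneg_left (hp i).2 (le_max_right _ _)
    _ = 1 / α * (q i * max (Z i - τ) 0) := by ring

/-- `t` is a `(1 - α)`-quantile of `Z` under the weights `q`. -/
theorem exists_sum_lt_le_and_le_sum_le (Z q : ι → ℝ) {α : ℝ} (hα : 0 < α)
    (hαq : α ≤ ∑ i, q i) :
    ∃ t, ∑ i with t < Z i, q i ≤ α ∧ α ≤ ∑ i with t ≤ Z i, q i := by
  have huniv : (univ : Finset ι).Nonempty := by
    by_contra h
    rw [not_nonempty_iff_eq_empty.1 h, sum_empty] at hαq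
    linarith
  obtain ⟨i₀, -, hi₀⟩ := exists_min_image univ Z huniv
  set S : Finset ι := {i | α ≤ ∑ j with Z i ≤ Z j, q j}
  have hS : S.Nonempty := ⟨i₀, by simpa [S, hi₀] using hαq⟩
  -- the largest candidate is the quantile: the next value of `Z` above it is not a candidate
  obtain ⟨k, hkS, hk⟩ := exists_max_image S Z hS
  refine ⟨Z k, ?_, (mem_filter.1 hkS).2⟩
  by_contra! hlt
  have hgt : ({i | Z k < Z i} : Finset ι).Nonempty := by
    by_contra h
    rw [not_nonempty_iff_eq_empty.1 h, sum_empty] at hlt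
    linarith
  obtain ⟨l, hl, hlmin⟩ := exists_min_image _ Z hgt
  have hkl : Z k < Z l := (mem_filter.1 hl).2
  have hlS : l ∈ S := by
    refine mem_filter.2 ⟨mem_univ l, hlt.le.trans (le_of_eq ?_)⟩
    refine sum_congr (filter_congr fun j _ => ⟨fun h => ?_, fun h => ?_⟩) fun _ _ => rfl
    · exact hlmin j (mem_filter.2 ⟨mem_univ j, h⟩)
    · exact hkl.trans_le h
  exact (hk l hlS).not_gt hkl

theorem exists_weight_sum_mul_eq {q : ι → ℝ} {α : ℝ} (Z : ι → ℝ) (hq : ∀ i, 0 ≤ q i) {τ : ℝ}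
    (hgt : ∑ i with τ < Z i, q i ≤ α) (hge : α ≤ ∑ i with τ ≤ Z i, q i) :
    ∃ w : ι → ℝ, (∀ i, 0 ≤ w i ∧ w i ≤ 1) ∧ (∀ i, (Z i - τ) * w i = max (Z i - τ) 0) ∧
      ∑ i, q i * w i = α := by
  set a := ∑ i with τ < Z i, q i
  set b := ∑ i with Z i = τ, q i
  have hb : 0 ≤ b := sum_nonneg fun i _ => hq i
  have hab : ∑ i with τ ≤ Z i, q i = a + b := by
    simp only [a, b, sum_filter, ← sum_add_distrib]
    refine sum_congr rfl fun i _ => ?_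
    rcases lt_trichotomy τ (Z i) with h | h | h
    · simp [h, h.ne', lt_asymm h]
    · simp [h]
    · simp [h.not_ge, h.not_gt, h.ne]
  set θ := (α - a) / b
  have hθ : 0 ≤ θ ∧ θ ≤ 1 := ⟨div_nonneg (by linarith) hb, div_le_one_of_le₀ (by linarith) hb⟩
  -- for `b = 0` the division is junk, but then `a = α` and both sides vanish
  have hθb : θ * b = α - a := by
    rcases hb.eq_or_lt with h | h
    · simp only [θ, ← h, mul_zero]; linarith
    · exact div_mul_cancel₀ _ h.ne'
  refine ⟨fun i => if τ < Z i then 1 else if Z i = τ then θ else 0, fun i => ?_, fun i => ?_, ?_⟩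
  · dsimp only
    split_ifs <;> simp [hθ]
  · dsimp only
    split_ifs with h₁ h₂
    · rw [mul_one, max_eq_left (by linarith)]
    · simp [h₂]
    · rw [mul_zero, max_eq_right (by linarith [lt_of_le_of_ne (not_lt.1 h₁) h₂])]
  · have : ∑ i, q i * (if τ < Z i then 1 else if Z i = τ then θ else 0) = a + θ * b := by
      simp only [a, b, sum_filter, mul_sum, ← sum_add_distrib]
      refine sum_congr rfl fun i _ => ?_
      split_ifs with h₁ h₂ h₃ <;> simp_all [mul_comm]
    linarith

theorem exists_sum_mul_eq_cvarObjective {q : ι → ℝ} {α : ℝ} (Z : ι → ℝ) (hq : ∀ i, 0 ≤ q i)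
    (hα : 0 < α) {τ : ℝ} (hgt : ∑ i with τ < Z i, q i ≤ α) (hge : α ≤ ∑ i with τ ≤ Z i, q i) :
    ∃ p : ι → ℝ, (∀ i, 0 ≤ p i ∧ p i ≤ q i / α) ∧ ∑ i, p i = 1 ∧
      ∑ i, Z i * p i = cvarObjective q α Z τ := by
  obtain ⟨w, hw, hslack, hqw⟩ := exists_weight_sum_mul_eq Z hq hgt hge
  have hsum : ∑ i, q i * w i / α = 1 := by rw [← sum_div, hqw, div_self hα.ne']
  refine ⟨fun i => q i * w i / α, fun i => ⟨?_, ?_⟩, hsum, ?_⟩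
  · exact div_nonneg (mul_nonneg (hq i) (hw i).1) hα.le
  · exact div_le_div_of_nonneg_right (mul_le_of_le_one_right (hq i) (hw i).2) hα.le
  · rw [sum_mul_eq_add_sum_sub_mul Z _ τ hsum, cvarObjective, mul_sum]
    refine congrArg (τ + ·) (sum_congr rfl fun i _ => ?_)
    rw [← hslack i]
    ring

end CVaR

/-- CVaR dual representation on a finite probability space: for `0 < β < 1`, the CVaR at level
`β` (Rockafellar–Uryasev representation) is the maximum of `∑ₘ Zₘ pₘ` over probability vectors
`p` with `0 ≤ pₘ ≤ qₘ/(1-β)`. -/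
theorem stmt_9 {M : ℕ} (q : Fin M → ℝ) (hq0 : ∀ m, 0 < q m) (hq1 : ∑ m, q m = 1)
    (β : ℝ) (hβ0 : 0 < β) (hβ1 : β < 1) (Z : Fin M → ℝ) :
    IsGreatest
      {v | ∃ p : Fin M → ℝ, (∀ m, 0 ≤ p m ∧ p m ≤ q m / (1 - β)) ∧ (∑ m, p m = 1) ∧
        v = ∑ m, Z m * p m}
      (sInf {v | ∃ τ : ℝ, v = τ + (1 / (1 - β)) * ∑ m, q m * max (Z m - τ) 0}) := by
  have hα : 0 < 1 - β := by linarith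
  obtain ⟨τ, hgt, hge⟩ := exists_sum_lt_le_and_le_sum_le Z q hα (by linarith)
  obtain ⟨p, hp, hp1, hval⟩ :=
    exists_sum_mul_eq_cvarObjective Z (fun m => (hq0 m).le) hα hgt hge
  refine isGreatest_csInf_of_forall_le ?_ ⟨p, hp, hp1, rfl⟩ ⟨τ, hval⟩
  rintro _ ⟨p', hp', hp1', rfl⟩ _ ⟨τ', rfl⟩
  exact sum_mul_le_cvarObjective Z hp' hp1' τ'
end

section
/- (One-dimensional Wasserstein DRO regularization, simplest case) Let h(x,ξ) = ξ·x for x, ξ ∈ ℝⁿ with the transport cost c(ξ₁,ξ₂) = ‖ξ₁−ξ₂‖_q. Then for any probability measure P₀ on ℝⁿ with finite first moment, sup over all P with 1-Wasserstein distance (induced by ‖·‖_q) at most ε from P₀ of E_P[ξᵀx] = E_{P₀}[ξᵀx] + ε‖x‖_p, where 1/p + 1/q = 1. -/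
/-!
By Hölder's inequality `ξ ↦ ξᵀx` is `‖x‖_p`-Lipschitz for `‖·‖_q`, so along any transport plan
`π` from `P₀` to `P` the expectation grows by `E_π[(ξ₂ - ξ₁)ᵀx] ≤ ‖x‖_p E_π‖ξ₁ - ξ₂‖_q ≤ ε‖x‖_p`.
The bound is attained by translating `P₀` by `ε d`, where `‖d‖_q ≤ 1` and `dᵀx = ‖x‖_p` is the
equality case of Hölder's inequality.
-/

open MeasureTheory Finset

noncomputable section

variable {ι : Type*} [Fintype ι]

def pNorm (r : ℝ) (y : ι → ℝ) : ℝ := (∑ i, |y i| ^ r) ^ (1 / r)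

lemma pNorm_nonneg (r : ℝ) (y : ι → ℝ) : 0 ≤ pNorm r y :=
  by unfold pNorm; positivity

lemma pNorm_neg (r : ℝ) (y : ι → ℝ) : pNorm r (-y) = pNorm r y := by
  simp [pNorm]

lemma pNorm_rpow {r : ℝ} (hr : r ≠ 0) (y : ι → ℝ) : pNorm r y ^ r = ∑ i, |y i| ^ r := by
  rw [pNorm, one_div, Real.rpow_inv_rpow (by positivity) hr]

lemma pNorm_smul {r : ℝ} (hr : r ≠ 0) (c : ℝ) (y : ι → ℝ) :
    pNorm r (c • y) = |c| * pNorm r y := by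
  simp only [pNorm, Pi.smul_apply, smul_eq_mul, abs_mul,
    Real.mul_rpow (abs_nonneg c) (abs_nonneg _), ← mul_sum]
  rw [Real.mul_rpow (by positivity) (by positivity), one_div,
    Real.rpow_rpow_inv (abs_nonneg c) hr]

lemma measurable_pNorm (r : ℝ) : Measurable (pNorm r : (ι → ℝ) → ℝ) := by
  unfold pNorm; fun_prop

lemma abs_sum_mul_le_pNorm_mul_pNorm {p q : ℝ} (hpq : p.HolderConjugate q) (x y : ι → ℝ) :
    |∑ i, y i * x i| ≤ pNorm p x * pNorm q y :=
  calc |∑ i, y i * x i| ≤ ∑ i, |x i| * |y i| :=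
        (abs_sum_le_sum_abs _ _).trans_eq (sum_congr rfl fun i _ => by rw [abs_mul, mul_comm])
    _ ≤ pNorm p x * pNorm q y := by
        simpa [pNorm] using Real.inner_le_Lp_mul_Lq univ (fun i => |x i|) (fun i => |y i|) hpq

lemma abs_sum_mul_sub_sum_mul_le {p q : ℝ} (hpq : p.HolderConjugate q) (x a b : ι → ℝ) :
    |∑ i, b i * x i - ∑ i, a i * x i| ≤ pNorm p x * pNorm q (a - b) := by
  rw [abs_sub_comm, ← sum_sub_distrib]
  simpa [sub_mul] using abs_sum_mul_le_pNorm_mul_pNorm hpq x (a - b)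

lemma exists_sum_mul_eq_pNorm {p q : ℝ} (hpq : p.HolderConjugate q) (x : ι → ℝ) :
    ∃ d : ι → ℝ, ∑ i, d i * x i = pNorm p x ∧ pNorm q d ≤ 1 := by
  rcases (pNorm_nonneg p x).eq_or_lt with hN | hN
  · refine ⟨0, by simp [← hN], ?_⟩
    simp [pNorm, Real.zero_rpow hpq.symm.ne_zero, Real.zero_rpow (inv_ne_zero hpq.symm.ne_zero)]
  set N := pNorm p x
  set u : ι → ℝ := fun i => |x i| / N
  have hu : ∀ i, 0 ≤ u i := fun i => div_nonneg (abs_nonneg _) hN.le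
  have hsum : ∑ i, u i ^ p = 1 := by
    simp only [u, Real.div_rpow (abs_nonneg _) hN.le]
    rw [← sum_div, ← pNorm_rpow hpq.ne_zero]
    exact div_self (Real.rpow_pos_of_pos hN p).ne'
  -- `d` is the gradient of `‖·‖_p` at `x`
  refine ⟨fun i => SignType.sign (x i) * u i ^ (p - 1), ?_, ?_⟩
  · calc ∑ i, SignType.sign (x i) * u i ^ (p - 1) * x i = ∑ i, N * (u i * u i ^ (p - 1)) :=
          sum_congr rfl fun i _ => by
            rw [mul_right_comm, sign_mul_self, ← mul_div_cancel₀ |x i| hN.ne']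
            ring
      _ = N := by
          have hp : 1 + (p - 1) ≠ 0 := by linarith [hpq.pos]
          simp only [← Real.rpow_one_add' (hu _) hp, add_sub_cancel, ← mul_sum, hsum, mul_one]
  · have hterm : ∀ i, |SignType.sign (x i) * u i ^ (p - 1)| ^ q ≤ u i ^ p := fun i => by
      have hsign : |(SignType.sign (x i) : ℝ)| ≤ 1 := by
        rcases lt_trichotomy (x i) 0 with h | h | h <;> simp [h]
      calc |SignType.sign (x i) * u i ^ (p - 1)| ^ q ≤ (u i ^ (p - 1)) ^ q := by
            rw [abs_mul, abs_of_nonneg (Real.rpow_nonneg (hu i) _)]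
            exact Real.rpow_le_rpow (by positivity)
              (mul_le_of_le_one_left (Real.rpow_nonneg (hu i) _) hsign) hpq.symm.nonneg
        _ = u i ^ p := by rw [← Real.rpow_mul (hu i), hpq.sub_one_mul_conj]
    exact Real.rpow_le_one (by positivity) ((sum_le_sum fun i _ => hterm i).trans hsum.le)
      (one_div_nonneg.2 hpq.symm.nonneg)

lemma integral_map_snd_le_integral_map_fst_add {α : Type*} [MeasurableSpace α]
    {π : Measure (α × α)} {f : α → ℝ} {c : α × α → ℝ} {L : ℝ} (hf : Measurable f)
    (hfi : Integrable f (π.map Prod.fst)) (hc : Integrable c π)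
    (hfc : ∀ z, |f z.2 - f z.1| ≤ L * c z) :
    ∫ a, f a ∂(π.map Prod.snd) ≤ ∫ a, f a ∂(π.map Prod.fst) + L * ∫ z, c z ∂π := by
  rw [integral_map measurable_snd.aemeasurable hf.aestronglyMeasurable,
    integral_map measurable_fst.aemeasurable hf.aestronglyMeasurable]
  have hfst : Integrable (fun z : α × α => f z.1) π :=
    (integrable_map_measure hf.aestronglyMeasurable measurable_fst.aemeasurable).1 hfi
  have hgap : Integrable (fun z : α × α => f z.2 - f z.1) π :=
    (hc.const_mul L).mono'
      ((hf.comp measurable_snd).sub (hf.comp measurable_fst)).aestronglyMeasurable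
      (ae_of_all _ hfc)
  calc ∫ z, f z.2 ∂π = ∫ z, f z.1 + (f z.2 - f z.1) ∂π := by simp
    _ = ∫ z, f z.1 ∂π + ∫ z, f z.2 - f z.1 ∂π := integral_add hfst hgap
    _ ≤ ∫ z, f z.1 ∂π + ∫ z, L * c z ∂π :=
        add_le_add le_rfl <|
          integral_mono hgap (hc.const_mul L) fun z => (le_abs_self _).trans (hfc z)
    _ = ∫ z, f z.1 ∂π + L * ∫ z, c z ∂π := by rw [integral_const_mul]

/-- `W(P₀, P) ≤ ε` for the cost `‖·‖_q`, phrased through a transport plan; optimal plans exist on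
`ℝⁿ`, so this is the closed Wasserstein ball itself. -/
def InWassersteinBall (q ε : ℝ) (P₀ P : Measure (ι → ℝ)) : Prop :=
  ∃ π : Measure ((ι → ℝ) × (ι → ℝ)), IsProbabilityMeasure π ∧
    π.map Prod.fst = P₀ ∧ π.map Prod.snd = P ∧
    Integrable (fun z => pNorm q (z.1 - z.2)) π ∧ ∫ z, pNorm q (z.1 - z.2) ∂π ≤ ε

lemma integral_sum_mul_le_of_inWassersteinBall {p q ε : ℝ} (hpq : p.HolderConjugate q)
    (x : ι → ℝ) {P₀ P : Measure (ι → ℝ)} (hfi : Integrable (fun ξ => ∑ i, ξ i * x i) P₀)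
    (hP : InWassersteinBall q ε P₀ P) :
    ∫ ξ, ∑ i, ξ i * x i ∂P ≤ ∫ ξ, ∑ i, ξ i * x i ∂P₀ + ε * pNorm p x := by
  obtain ⟨π, -, rfl, rfl, hc, hcε⟩ := hP
  calc _ ≤ _ + pNorm p x * ∫ z, pNorm q (z.1 - z.2) ∂π :=
        integral_map_snd_le_integral_map_fst_add (by fun_prop) hfi hc
          fun z => abs_sum_mul_sub_sum_mul_le hpq x z.1 z.2
    _ ≤ _ + ε * pNorm p x := by
        rw [mul_comm ε]
        gcongr
        exact pNorm_nonneg p x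

lemma inWassersteinBall_map_add_const {q ε : ℝ} (P₀ : Measure (ι → ℝ))
    [IsProbabilityMeasure P₀] {v : ι → ℝ} (hv : pNorm q v ≤ ε) :
    InWassersteinBall q ε P₀ (P₀.map (· + v)) := by
  have hT : Measurable fun ξ : ι → ℝ => (ξ, ξ + v) := measurable_id.prodMk (measurable_add_const v)
  have hcost : Measurable fun z : (ι → ℝ) × (ι → ℝ) => pNorm q (z.1 - z.2) :=
    (measurable_pNorm q).comp (measurable_fst.sub measurable_snd)
  refine ⟨P₀.map fun ξ => (ξ, ξ + v), Measure.isProbabilityMeasure_map hT.aemeasurable,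
    (Measure.fst_map_prodMk (measurable_add_const v)).trans Measure.map_id',
    Measure.snd_map_prodMk measurable_id, ?_, ?_⟩
  · rw [integrable_map_measure hcost.aestronglyMeasurable hT.aemeasurable]
    simp [Function.comp_def, pNorm_neg]
  · rw [integral_map hT.aemeasurable hcost.aestronglyMeasurable]
    simpa [pNorm_neg] using hv

lemma integral_sum_mul_map_add_const (P₀ : Measure (ι → ℝ)) [IsProbabilityMeasure P₀]
    (x v : ι → ℝ) (hfi : Integrable (fun ξ => ∑ i, ξ i * x i) P₀) :
    ∫ ξ, ∑ i, ξ i * x i ∂(P₀.map (· + v)) = ∫ ξ, ∑ i, ξ i * x i ∂P₀ + ∑ i, v i * x i := by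
  rw [integral_map (measurable_add_const v).aemeasurable
    (by fun_prop : Measurable fun ξ : ι → ℝ => ∑ i, ξ i * x i).aestronglyMeasurable]
  simp only [Pi.add_apply, add_mul, sum_add_distrib]
  rw [integral_add hfi (integrable_const _), integral_const]
  simp

end

theorem stmt_16_general {n : ℕ} (p q : ℝ) (hq : 1 < q) (hpq : 1 / p + 1 / q = 1)
    (x : Fin n → ℝ) (P₀ : Measure (Fin n → ℝ)) [IsProbabilityMeasure P₀]
    (hmom' : ∀ i, Integrable (fun ξ : Fin n → ℝ => ξ i) P₀)
    (ε : ℝ) (hε : 0 ≤ ε) :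
    sSup {v | ∃ P : Measure (Fin n → ℝ), IsProbabilityMeasure P ∧
        (∃ π : Measure ((Fin n → ℝ) × (Fin n → ℝ)), IsProbabilityMeasure π ∧
          π.map Prod.fst = P₀ ∧ π.map Prod.snd = P ∧
          Integrable (fun sp : (Fin n → ℝ) × (Fin n → ℝ) =>
            (∑ i, |sp.1 i - sp.2 i| ^ q) ^ (1 / q)) π ∧
          (∫ sp, (∑ i, |sp.1 i - sp.2 i| ^ q) ^ (1 / q) ∂π) ≤ ε) ∧
        v = ∫ ξ, ∑ i, ξ i * x i ∂P} =
      (∫ ξ, ∑ i, ξ i * x i ∂P₀) + ε * (∑ i, |x i| ^ p) ^ (1 / p) := by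
  have hpq' : p.HolderConjugate q :=
    (Real.holderConjugate_iff.2 ⟨hq, by simpa [one_div, add_comm] using hpq⟩).symm
  have hfi : Integrable (fun ξ : Fin n → ℝ => ∑ i, ξ i * x i) P₀ :=
    integrable_finsetSum _ fun i _ => (hmom' i).mul_const _
  obtain ⟨d, hdx, hd⟩ := exists_sum_mul_eq_pNorm hpq' x
  have hεd : pNorm q (ε • d) ≤ ε := by
    rw [pNorm_smul hpq'.symm.ne_zero, abs_of_nonneg hε]
    exact mul_le_of_le_one_right hε hd
  refine IsGreatest.csSup_eq ⟨⟨P₀.map (· + ε • d),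
    Measure.isProbabilityMeasure_map (measurable_add_const _).aemeasurable,
    inWassersteinBall_map_add_const P₀ hεd, ?_⟩, ?_⟩
  · rw [integral_sum_mul_map_add_const P₀ x _ hfi]
    simp [mul_assoc, ← mul_sum, hdx, pNorm]
  · rintro _ ⟨P, -, hP, rfl⟩
    exact integral_sum_mul_le_of_inWassersteinBall hpq' x hfi hP

/-- Wasserstein DRO of a linear cost function: with transport cost `‖·‖_q` and dual exponent
`p` (`1/p + 1/q = 1`), the worst-case expectation of `ξ ↦ ξᵀx` over the 1-Wasserstein ball of
radius `ε` around `P₀` equals `E_{P₀}[ξᵀx] + ε‖x‖_p`. -/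
theorem stmt_16 {n : ℕ} (p q : ℝ) (hq : 1 < q) (hpq : 1 / p + 1 / q = 1)
    (x : Fin n → ℝ) (P₀ : Measure (Fin n → ℝ)) [IsProbabilityMeasure P₀]
    (hmom : Integrable (fun ξ : Fin n → ℝ => (∑ i, |ξ i| ^ q) ^ (1 / q)) P₀)
    (hmom' : ∀ i, Integrable (fun ξ : Fin n → ℝ => ξ i) P₀)
    (ε : ℝ) (hε : 0 ≤ ε) :
    sSup {v | ∃ P : Measure (Fin n → ℝ), IsProbabilityMeasure P ∧
        (∃ π : Measure ((Fin n → ℝ) × (Fin n → ℝ)), IsProbabilityMeasure π ∧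
          π.map Prod.fst = P₀ ∧ π.map Prod.snd = P ∧
          Integrable (fun sp : (Fin n → ℝ) × (Fin n → ℝ) =>
            (∑ i, |sp.1 i - sp.2 i| ^ q) ^ (1 / q)) π ∧
          (∫ sp, (∑ i, |sp.1 i - sp.2 i| ^ q) ^ (1 / q) ∂π) ≤ ε) ∧
        v = ∫ ξ, ∑ i, ξ i * x i ∂P} =
      (∫ ξ, ∑ i, ξ i * x i ∂P₀) + ε * (∑ i, |x i| ^ p) ^ (1 / p) :=
  stmt_16_general p q hq hpq x P₀ hmom' ε hε
end
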